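/- Let N be a positive integer and m a nonzero integer. Let R = ℤ[T,T⁻¹] be the ring of Laurent polynomials over ℤ, let A be the 4×4 matrix over R whose diagonal entries all equal T^N − 1, whose entry in row 1 and column 4 equals −mT, and whose other entries are zero, and let M be the cokernel of the R-linear map R⁴ → R⁴ given by multiplication by A. Then the set of elements σ ∈ M such that T^{−k}·σ ≠ σ for every positive integer k is infinite. -/

import Mathlib

open LaurentPolynomial

noncomputable section

/-- The 4×4 matrix over ℤ[T,T⁻¹] with diagonal entries `T^N - 1`, entry `-m·T`
in row 1, column 4 (zero-indexed: row 0, column 3), and all other entries zero. -/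
def Amat (N : ℕ) (m : ℤ) : Matrix (Fin 4) (Fin 4) (LaurentPolynomial ℤ) :=
  fun i j =>
    if i = j then T (N : ℤ) - 1
    else if i = 0 ∧ j = 3 then -(m : LaurentPolynomial ℤ) * T 1
    else 0

/-- The cokernel of the map `R⁴ → R⁴` given by multiplication by `Amat N m`. -/
def Coker (N : ℕ) (m : ℤ) :=
  (Fin 4 → LaurentPolynomial ℤ) ⧸ LinearMap.range (Amat N m).mulVecLin

instance (N : ℕ) (m : ℤ) : AddCommGroup (Coker N m) :=
  Submodule.Quotient.addCommGroup _

instance (N : ℕ) (m : ℤ) : Module (LaurentPolynomial ℤ) (Coker N m) :=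
  Submodule.Quotient.module _

/-- `σ_i`: the class of the vector `(0,0,0,i)` in the cokernel. -/
def sigma (N : ℕ) (m : ℤ) (i : ℤ) : Coker N m :=
  Submodule.Quotient.mk ![0, 0, 0, (i : LaurentPolynomial ℤ)]

/-!
Evaluate at `T = 1 + ε` in the dual numbers, i.e. record the value and the first derivative at
`T = 1`. Then `T^N - 1 ↦ Nε` and `ε² = 0`, so the functional `v ↦ Nε·v₀(1+ε) + m·v₃(1+ε)` kills
every column of `Amat N m` and descends to the cokernel, semilinearly over the evaluation. It
sends `σ_i` to `m i` and `T^k • σ_i` to `(1 + kε) m i`: for `m ≠ 0` the `σ_i` are pairwise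
distinct, and for `i ≠ 0` none of them is fixed by a `T^k` with `k ≠ 0`.
-/

open DualNumber
open scoped Matrix

section DualNumber

variable (R : Type*) [CommRing R]

def oneAddEpsUnit : R[ε]ˣ where
  val := 1 + ε
  inv := 1 - ε
  val_inv := by linear_combination -eps_mul_eps (R := R)
  inv_val := by linear_combination -eps_mul_eps (R := R)

lemma oneAddEpsUnit_zpow (n : ℤ) :
    ((oneAddEpsUnit R ^ n : R[ε]ˣ) : R[ε]) = 1 + (n : R[ε]) * ε := by
  induction n using Int.induction_on with
  | zero => simp
  | succ n ih =>
    rw [zpow_add_one, Units.val_mul, ih]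
    push_cast
    simp only [oneAddEpsUnit]
    linear_combination (n : R[ε]) * eps_mul_eps (R := R)
  | pred n ih =>
    rw [zpow_sub_one, Units.val_mul, ih]
    push_cast
    simp only [oneAddEpsUnit, Units.inv_mk]
    linear_combination (n : R[ε]) * eps_mul_eps (R := R)

def evalOneAddEps : R[T;T⁻¹] →+* R[ε] :=
  eval₂ (algebraMap R R[ε]) (oneAddEpsUnit R)

@[simp]
lemma evalOneAddEps_T (n : ℤ) : evalOneAddEps R (T n) = 1 + (n : R[ε]) * ε := by
  rw [evalOneAddEps, eval₂_T, oneAddEpsUnit_zpow]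

end DualNumber

lemma Amat_mulVec_zero (N : ℕ) (m : ℤ) (v : Fin 4 → ℤ[T;T⁻¹]) :
    (Amat N m *ᵥ v) 0 = (T N - 1) * v 0 - (m : ℤ[T;T⁻¹]) * T 1 * v 3 := by
  simp only [Matrix.mulVec, dotProduct, Amat, Fin.isValue, true_and, neg_mul, ite_mul, zero_mul,
    Fin.sum_univ_four, ↓reduceIte, zero_ne_one, Fin.reduceEq, add_zero]
  ring

lemma Amat_mulVec_three (N : ℕ) (m : ℤ) (v : Fin 4 → ℤ[T;T⁻¹]) :
    (Amat N m *ᵥ v) 3 = (T N - 1) * v 3 := by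
  simp [Amat, Matrix.mulVec, dotProduct]

def dualFunctional (N : ℕ) (m : ℤ) :
    (Fin 4 → ℤ[T;T⁻¹]) →ₛₗ[evalOneAddEps ℤ] ℤ[ε] where
  toFun v := (N : ℤ[ε]) * ε * evalOneAddEps ℤ (v 0) + (m : ℤ[ε]) * evalOneAddEps ℤ (v 3)
  map_add' v w := by simp only [Pi.add_apply, map_add]; ring
  map_smul' r v := by simp only [Pi.smul_apply, smul_eq_mul, map_mul]; ring

lemma dualFunctional_mulVec_Amat (N : ℕ) (m : ℤ) (v : Fin 4 → ℤ[T;T⁻¹]) :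
    dualFunctional N m (Amat N m *ᵥ v) = 0 := by
  simp only [dualFunctional, LinearMap.coe_mk, AddHom.coe_mk, Amat_mulVec_zero,
    Amat_mulVec_three, map_sub, map_mul, map_one, map_intCast, evalOneAddEps_T]
  set x := evalOneAddEps ℤ (v 0)
  set y := evalOneAddEps ℤ (v 3)
  linear_combination (N * N * x - N * m * y) * eps_mul_eps (R := ℤ)

def cokerFunctional (N : ℕ) (m : ℤ) : Coker N m →ₛₗ[evalOneAddEps ℤ] ℤ[ε] :=
  (LinearMap.range (Amat N m).mulVecLin).liftQ (dualFunctional N m) <| by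
    rintro _ ⟨v, rfl⟩
    exact dualFunctional_mulVec_Amat N m v

lemma cokerFunctional_sigma (N : ℕ) (m i : ℤ) :
    cokerFunctional N m (sigma N m i) = (m * i : ℤ) := by
  change dualFunctional N m ![0, 0, 0, (i : ℤ[T;T⁻¹])] = _
  simp [dualFunctional]

lemma sigma_injective (N : ℕ) {m : ℤ} (hm : m ≠ 0) : Function.Injective (sigma N m) := by
  intro i j h
  simpa [cokerFunctional_sigma, hm] using congrArg (TrivSqZeroExt.fst ∘ cokerFunctional N m) h

lemma T_smul_sigma_ne (N : ℕ) {m k i : ℤ} (hm : m ≠ 0) (hk : k ≠ 0) (hi : i ≠ 0) :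
    (T k : ℤ[T;T⁻¹]) • sigma N m i ≠ sigma N m i := by
  intro h
  have hcoker := congrArg (cokerFunctional N m) h
  rw [map_smulₛₗ, evalOneAddEps_T, cokerFunctional_sigma, smul_eq_mul] at hcoker
  simpa [hk, hm, hi] using congrArg TrivSqZeroExt.snd hcoker

theorem stmt5_general (N : ℕ) (m : ℤ) (hm : m ≠ 0) :
    {σ : Coker N m |
      ∀ k : ℕ, 0 < k → ((T (-(k : ℤ)) : LaurentPolynomial ℤ)) • σ ≠ σ}.Infinite := by
  refine Set.infinite_of_injective_forall_mem (f := fun n : ℕ => sigma N m (n + 1)) ?_ ?_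
  · intro a b h
    have hab := sigma_injective N hm h
    omega
  · intro n k hk
    exact T_smul_sigma_ne N hm (by omega) (by omega)

theorem stmt5 (N : ℕ) (hN : 0 < N) (m : ℤ) (hm : m ≠ 0) :
    {σ : Coker N m |
      ∀ k : ℕ, 0 < k → ((T (-(k : ℤ)) : LaurentPolynomial ℤ)) • σ ≠ σ}.Infinite :=
  stmt5_general N m hm
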